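/- arXiv:1404.0729 — 6 statements merged into one kernel-verified Lean document; each statement's English description precedes it below -/
import Mathlib

section
/- The operation ∗ is associative: for all R-linear endomorphisms r, s, t of V one has (r ∗ s) ∗ t = r ∗ (s ∗ t). -/
/-! Writing `s ∗ t = t + s δ(t)`, associativity reduces to the multiplicativity
`δ(s ∗ t) = δ(s) δ(t)`, which holds because `∂² = 0` makes every `δ(t)` commute with `∂`. -/

/- Let `R` be a commutative ring, `V` an `R`-module and `D = ∂ : V → V` an `R`-linear map
with `∂ ∘ ∂ = 0`.  In `Module.End R V`, multiplication is composition, so `s * t = s ∘ t`. -/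

variable {R : Type*} [CommRing R] {V : Type*} [AddCommGroup V] [Module R V]

/-- `s ∗ t := s + t + s∘∂∘t + s∘t∘∂`. -/
def mulStar (D s t : Module.End R V) : Module.End R V :=
  s + t + s * D * t + s * t * D

/-- `δ(s) := ∂∘s + s∘∂ + id`. -/
def dlt (D s : Module.End R V) : Module.End R V :=
  D * s + s * D + 1

theorem mulStar_eq_add_mul_dlt (D s t : Module.End R V) :
    mulStar D s t = t + s * dlt D t := by
  simp only [mulStar, dlt, mul_add, mul_one, mul_assoc]
  abel

theorem commute_dlt {D : Module.End R V} (hD : D * D = 0) (s : Module.End R V) :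
    Commute D (dlt D s) :=
  calc D * dlt D s = D * s * D + D := by
        simp only [dlt, mul_add, ← mul_assoc, hD, zero_mul, zero_add, mul_one]
    _ = dlt D s * D := by
        simp only [dlt, add_mul, mul_assoc, hD, mul_zero, add_zero, one_mul]

theorem dlt_mulStar {D : Module.End R V} (hD : D * D = 0) (s t : Module.End R V) :
    dlt D (mulStar D s t) = dlt D s * dlt D t :=
  calc dlt D (mulStar D s t) = dlt D t + D * s * dlt D t + s * (dlt D t * D) := by
        simp only [mulStar_eq_add_mul_dlt, dlt, mul_add, add_mul, mul_one, one_mul, mul_assoc]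
        abel
    _ = dlt D t + D * s * dlt D t + s * D * dlt D t := by
        rw [← (commute_dlt hD t).eq, ← mul_assoc]
    _ = dlt D s * dlt D t := by
        simp only [dlt, add_mul, one_mul]
        abel

/-- the operation ∗ is associative. -/
theorem mulStar_assoc (D : Module.End R V) (hD : D * D = 0) (r s t : Module.End R V) :
    mulStar D (mulStar D r s) t = mulStar D r (mulStar D s t) := by
  calc mulStar D (mulStar D r s) t = t + (s + r * dlt D s) * dlt D t := by
        rw [mulStar_eq_add_mul_dlt, mulStar_eq_add_mul_dlt D r s]
    _ = t + s * dlt D t + r * dlt D (mulStar D s t) := by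
        rw [dlt_mulStar hD, add_mul, mul_assoc, add_assoc]
    _ = mulStar D r (mulStar D s t) := by
        rw [mulStar_eq_add_mul_dlt D r, mulStar_eq_add_mul_dlt D s t]
end

section
/- Existence of ∗-inverses: if s is an R-linear endomorphism of V such that δ(s) is invertible, then the endomorphism t := −s ∘ δ(s)⁻¹ satisfies s ∗ t = 0 and t ∗ s = 0. -/
/- Let `R` be a commutative ring, `V` an `R`-module and `D = ∂ : V → V` an `R`-linear map
with `∂ ∘ ∂ = 0`.  In `Module.End R V`, multiplication is composition, so `s * t = s ∘ t`. -/

variable {R : Type*} [CommRing R] {V : Type*} [AddCommGroup V] [Module R V]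

/-! With `w := δ(s)`, both `s ∗ (-s u)` and `(-s u) ∗ s` collapse to `s - s w u` resp.
`s - s u w`, the first one once `u` commutes with `∂`. Since `∂² = 0`, `∂` commutes with `w`
(both `∂ w` and `w ∂` equal `∂ s ∂ + ∂`), hence with `w⁻¹`, and `u := w⁻¹` kills both. -/

theorem Commute.ringInverse_right {M₀ : Type*} [MonoidWithZero M₀] {a b : M₀}
    (h : Commute a b) : Commute a (Ring.inverse b) := by
  by_cases hb : IsUnit b
  · obtain ⟨u, rfl⟩ := hb
    rw [Ring.inverse_unit]
    exact h.units_inv_right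
  · rw [Ring.inverse_non_unit b hb]
    exact Commute.zero_right a

theorem mulStar_neg_mul_left (D s u : Module.End R V) :
    mulStar D (-(s * u)) s = s - s * u * dlt D s := by
  rw [mulStar, dlt]
  noncomm_ring

theorem mulStar_neg_mul_right {D u : Module.End R V} (hu : Commute D u) (s : Module.End R V) :
    mulStar D s (-(s * u)) = s - s * dlt D s * u := by
  have hsuD : s * (s * u) * D = s * s * D * u := by
    rw [mul_assoc, mul_assoc, hu.eq.symm, ← mul_assoc, ← mul_assoc]
  rw [mulStar, dlt, mul_neg, mul_neg, neg_mul, hsuD]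
  noncomm_ring

/-- existence of ∗-inverses: if δ(s) is invertible then
t := −s ∘ δ(s)⁻¹ satisfies s ∗ t = 0 and t ∗ s = 0. -/
theorem mulStar_inv (D : Module.End R V) (hD : D * D = 0) (s : Module.End R V)
    (hs : IsUnit (dlt D s)) :
    mulStar D s (-(s * Ring.inverse (dlt D s))) = 0 ∧
    mulStar D (-(s * Ring.inverse (dlt D s))) s = 0 := by
  have hD_inv : Commute D (Ring.inverse (dlt D s)) := (commute_dlt hD s).ringInverse_right
  constructor
  · rw [mulStar_neg_mul_right hD_inv, mul_assoc, Ring.mul_inverse_cancel _ hs, mul_one, sub_self]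
  · rw [mulStar_neg_mul_left, mul_assoc, Ring.inverse_mul_cancel _ hs, mul_one, sub_self]
end

section
/- Normality of the subgroup of ∂-commutators: if r is an R-linear endomorphism of V with δ(r) invertible and r' := −r ∘ δ(r)⁻¹ is its ∗-inverse, then for every R-linear endomorphism x of V one has r' ∗ (∂∘x − x∘∂) ∗ r = ∂∘(x∘δ(r)) − (x∘δ(r))∘∂. -/
/- Let `R` be a commutative ring, `V` an `R`-module and `D = ∂ : V → V` an `R`-linear map
with `∂ ∘ ∂ = 0`.  In `Module.End R V`, multiplication is composition, so `s * t = s ∘ t`. -/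

variable {R : Type*} [CommRing R] {V : Type*} [AddCommGroup V] [Module R V]

/-! The product factors as `s ∗ t = s ∘ δ(t) + t`. Since `δ(∂∘x − x∘∂) = id`, right
∗-multiplication by a ∂-commutator `c` is just addition of `c`, so
`r' ∗ c ∗ r = (r' + c) ∘ δ(r) + r = (r' ∗ r) + c ∘ δ(r) = c ∘ δ(r)`, and `c ∘ δ(r)` is the
∂-commutator of `x ∘ δ(r)` because `δ(r)` commutes with `∂`. -/

theorem mulStar_eq_mul_dlt_add (D s t : Module.End R V) : mulStar D s t = s * dlt D t + t := by
  simp only [mulStar, dlt]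
  noncomm_ring

theorem dlt_sub_commutator {D : Module.End R V} (hD : D * D = 0) (x : Module.End R V) :
    dlt D (D * x - x * D) = 1 := by
  have hDD : ∀ y : Module.End R V, y * D * D = 0 := fun y => by rw [mul_assoc, hD, mul_zero]
  simp only [dlt, mul_sub, sub_mul, ← mul_assoc, hD, hDD, zero_mul, sub_zero]
  abel

theorem mulStar_neg_mul_inverse_dlt {D r : Module.End R V} (hr : IsUnit (dlt D r)) :
    mulStar D (-(r * Ring.inverse (dlt D r))) r = 0 := by
  rw [mulStar_eq_mul_dlt_add, neg_mul, mul_assoc, Ring.inverse_mul_cancel _ hr, mul_one,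
    neg_add_cancel]

/-- normality of the subgroup of ∂-commutators:
r' ∗ (∂∘x − x∘∂) ∗ r = ∂∘(x∘δ(r)) − (x∘δ(r))∘∂, where r' = −r ∘ δ(r)⁻¹. -/
theorem commutators_normal (D : Module.End R V) (hD : D * D = 0) (r : Module.End R V)
    (hr : IsUnit (dlt D r)) (x : Module.End R V) :
    mulStar D (mulStar D (-(r * Ring.inverse (dlt D r))) (D * x - x * D)) r
      = D * (x * dlt D r) - (x * dlt D r) * D := by
  set r' := -(r * Ring.inverse (dlt D r))
  set c := D * x - x * D
  calc mulStar D (mulStar D r' c) r = mulStar D (r' + c) r := by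
        rw [mulStar_eq_mul_dlt_add D r' c, dlt_sub_commutator hD, mul_one]
    _ = mulStar D r' r + c * dlt D r := by
        simp only [mulStar_eq_mul_dlt_add, add_mul]
        abel
    _ = D * (x * dlt D r) - (x * dlt D r) * D := by
        rw [mulStar_neg_mul_inverse_dlt hr, zero_add, sub_mul, mul_assoc, mul_assoc,
          (commute_dlt hD r).eq, mul_assoc]
end

section
/- The bracket [s,t] := s∘∂∘t − t∘∂∘s + s∘t∘∂ − t∘s∘∂ on R-linear endomorphisms of V is alternating and satisfies the Jacobi identity: [r,[s,t]] + [s,[t,r]] + [t,[r,s]] = 0 for all R-linear endomorphisms r, s, t of V. -/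
/-!
Writing `δ'(s) = ∂∘s + s∘∂`, the bracket is the commutator `[s,t] = s ⋆ t - t ⋆ s` of the
product `s ⋆ t := s∘δ'(t)`. Since `∂∘∂ = 0` we have `δ'(t∘δ'(u)) = δ'(t)∘δ'(u)`, so `⋆` is
associative, and the commutator of an associative product is alternating and satisfies Jacobi.
-/

/- Let `R` be a commutative ring, `V` an `R`-module and `D = ∂ : V → V` an `R`-linear map
with `∂ ∘ ∂ = 0`.  In `Module.End R V`, multiplication is composition, so `s * t = s ∘ t`. -/

variable {R : Type*} [CommRing R] {V : Type*} [AddCommGroup V] [Module R V]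

/-- the bracket `[s,t] := s∘∂∘t − t∘∂∘s + s∘t∘∂ − t∘s∘∂`. -/
def br (D s t : Module.End R V) : Module.End R V :=
  s * D * t - t * D * s + s * t * D - t * s * D

/-- `δ'(s) := ∂∘s + s∘∂`. -/
def dlt' (D s : Module.End R V) : Module.End R V :=
  D * s + s * D

/-- the action `φ ▷ s := φ∘s − s∘φ`. -/
def act (φ s : Module.End R V) : Module.End R V :=
  φ * s - s * φ

section

variable (D : Module.End R V)

theorem br_eq_mul_dlt'_sub (s t : Module.End R V) :
    br D s t = s * dlt' D t - t * dlt' D s := by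
  simp only [br, dlt', mul_add, mul_assoc]
  abel

theorem dlt'_sub (s t : Module.End R V) : dlt' D (s - t) = dlt' D s - dlt' D t := by
  simp only [dlt', mul_sub, sub_mul]
  abel

theorem br_self (s : Module.End R V) : br D s s = 0 := by
  rw [br_eq_mul_dlt'_sub, sub_self]

end

theorem dlt'_mul_dlt' {D : Module.End R V} (hD : D * D = 0) (t u : Module.End R V) :
    dlt' D (t * dlt' D u) = dlt' D t * dlt' D u := by
  have hD' : ∀ x : Module.End R V, D * (D * x) = 0 := fun x => by
    rw [← mul_assoc, hD, zero_mul]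
  simp only [dlt', mul_add, add_mul, mul_assoc, hD, hD', mul_zero, add_zero]
  abel

theorem mul_dlt'_mul_dlt' {D : Module.End R V} (hD : D * D = 0) (s t u : Module.End R V) :
    s * dlt' D t * dlt' D u = s * dlt' D (t * dlt' D u) := by
  rw [mul_assoc, dlt'_mul_dlt' hD]

/-- the bracket is alternating and satisfies the Jacobi identity. -/
theorem br_lie (D : Module.End R V) (hD : D * D = 0) :
    (∀ s : Module.End R V, br D s s = 0) ∧
    (∀ r s t : Module.End R V,
      br D r (br D s t) + br D s (br D t r) + br D t (br D r s) = 0) := by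
  refine ⟨br_self D, fun r s t => ?_⟩
  -- every term becomes `± x ⋆ (y ⋆ z)` with `{x, y, z} = {r, s, t}`, and these cancel in pairs
  simp only [br_eq_mul_dlt'_sub, dlt'_sub, mul_sub, sub_mul, mul_dlt'_mul_dlt' hD]
  abel
end

section
/- Exponential formula for GL⁻¹(V): let V be a finite-dimensional real normed vector space and ∂, A continuous linear endomorphisms of V with ∂ ∘ ∂ = 0. Then the series E(A) := Σ_{i,j ≥ 0} (1/(i+j+1)!) (A∘∂)^i ∘ A ∘ (A∘∂)^j converges absolutely, and δ(E(A)) = exp(∂∘A + A∘∂), where δ(s) := ∂∘s + s∘∂ + id and exp is the exponential of a continuous linear endomorphism. In particular δ(E(A)) is invertible, so E(A) lies in the group { s | δ(s) invertible }. -/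
/-!
Put `B = ∂A` and `C = A∂`. Since `∂² = 0` we have `CB = 0`, so `(B + C)ⁿ = ∑_{i+j=n} Bⁱ Cʲ`.
Termwise, `∂E = ∑ (i+j+1)!⁻¹ Bⁱ⁺¹ Cʲ` and `E∂ = ∑ (i+1)!⁻¹ Cⁱ⁺¹` (as `C∂ = 0`); grouping the
first series along `i + j = n` and adding the second gives `∑ (n+1)!⁻¹ (B + C)ⁿ⁺¹ = exp(B + C) - 1`.
-/

open NormedSpace Finset

theorem HasSum.sum_antidiagonal {A M : Type*} [AddMonoid A] [HasAntidiagonal A]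
    [AddCommMonoid M] [TopologicalSpace M] [ContinuousAdd M] [T3Space M] {f : A × A → M} {a : M}
    (h : HasSum f a) : HasSum (fun n => ∑ p ∈ antidiagonal n, f p) a :=
  (HasAntidiagonal.sigmaAntidiagonalEquivProd.hasSum_iff.mpr h).sigma
    fun n => (antidiagonal n).hasSum f

section Ring

variable {R : Type*} [Ring R]

theorem mul_add_pow_of_mul_eq_zero {B C : R} (h : C * B = 0) (n : ℕ) :
    C * (B + C) ^ n = C ^ (n + 1) := by
  induction n with
  | zero => simp
  | succ n ih =>
    rw [pow_succ, ← mul_assoc, ih, mul_add, ← pow_succ, pow_succ C n, mul_assoc _ C B, h,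
      mul_zero, zero_add]

theorem add_pow_eq_sum_antidiagonal_of_mul_eq_zero {B C : R} (h : C * B = 0) (n : ℕ) :
    (B + C) ^ n = ∑ p ∈ antidiagonal n, B ^ p.1 * C ^ p.2 := by
  induction n with
  | zero => simp
  | succ n ih =>
    rw [pow_succ', add_mul, mul_add_pow_of_mul_eq_zero h, Nat.sum_antidiagonal_succ, add_comm]
    nth_rw 1 [ih]
    simp [mul_sum, pow_succ', mul_assoc]

variable [Algebra ℝ R]

noncomputable def expFormulaTerm (D A : R) (p : ℕ × ℕ) : R :=
  (((p.1 + p.2 + 1).factorial : ℝ))⁻¹ • ((A * D) ^ p.1 * A * (A * D) ^ p.2)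

theorem mul_expFormulaTerm (D A : R) (p : ℕ × ℕ) :
    D * expFormulaTerm D A p =
      (((p.1 + p.2 + 1).factorial : ℝ))⁻¹ • ((D * A) ^ (p.1 + 1) * (A * D) ^ p.2) := by
  rw [expFormulaTerm, mul_smul_comm, ← mul_assoc, ← mul_assoc, ← mul_pow_mul, pow_succ,
    mul_assoc _ D A]

theorem expFormulaTerm_mul {D : R} (hD : D * D = 0) (A : R) (p : ℕ × ℕ) :
    expFormulaTerm D A p * D =
      if p.2 = 0 then (((p.1 + 1).factorial : ℝ))⁻¹ • (A * D) ^ (p.1 + 1) else 0 := by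
  obtain ⟨i, _ | j⟩ := p
  · simp [expFormulaTerm, mul_assoc, pow_succ]
  · simp [expFormulaTerm, mul_assoc, pow_succ, hD]

end Ring

section NormedRing

variable {R : Type*}

theorem norm_pow_mul_mul_pow_le [NormedRing R] (x a : R) (i j : ℕ) :
    ‖x ^ i * a * x ^ j‖ ≤ ‖x‖ ^ i * ‖a‖ * ‖x‖ ^ j := by
  induction i with
  | zero =>
    induction j with
    | zero => simp
    | succ j ih =>
      calc ‖x ^ 0 * a * x ^ (j + 1)‖ = ‖x ^ 0 * a * x ^ j * x‖ := by
            rw [pow_succ, mul_assoc _ _ x]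
        _ ≤ ‖x ^ 0 * a * x ^ j‖ * ‖x‖ := norm_mul_le _ _
        _ ≤ ‖x‖ ^ 0 * ‖a‖ * ‖x‖ ^ (j + 1) := by
          rw [pow_succ, ← mul_assoc]; gcongr
  | succ i ih =>
    calc ‖x ^ (i + 1) * a * x ^ j‖ = ‖x * (x ^ i * a * x ^ j)‖ := by
          simp only [pow_succ', mul_assoc]
      _ ≤ ‖x‖ * ‖x ^ i * a * x ^ j‖ := norm_mul_le _ _
      _ ≤ ‖x‖ * (‖x‖ ^ i * ‖a‖ * ‖x‖ ^ j) := by gcongr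
      _ = ‖x‖ ^ (i + 1) * ‖a‖ * ‖x‖ ^ j := by ring

theorem summable_norm_expFormulaTerm [NormedRing R] [NormedAlgebra ℝ R] (D A : R) :
    Summable fun p => ‖expFormulaTerm D A p‖ := by
  set C := A * D
  have hexp := Real.summable_pow_div_factorial ‖C‖
  refine Summable.of_nonneg_of_le (fun _ => norm_nonneg _) (fun p => ?_)
    (hexp.mul_of_nonneg (hexp.mul_left ‖A‖) (fun _ => by positivity) (fun _ => by positivity))
  obtain ⟨i, j⟩ := p
  have hfact : (i.factorial * j.factorial : ℝ) ≤ (i + j + 1).factorial := by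
    exact_mod_cast Nat.le_of_dvd (Nat.factorial_pos _)
      ((Nat.factorial_mul_factorial_dvd_factorial_add i j).trans
        (Nat.factorial_dvd_factorial (Nat.le_succ _)))
  calc ‖expFormulaTerm D A (i, j)‖
      = ((i + j + 1).factorial : ℝ)⁻¹ * ‖C ^ i * A * C ^ j‖ := by
        rw [expFormulaTerm, norm_smul, norm_inv, RCLike.norm_natCast]
    _ ≤ (i.factorial * j.factorial : ℝ)⁻¹ * (‖C‖ ^ i * ‖A‖ * ‖C‖ ^ j) := by
        gcongr
        exact norm_pow_mul_mul_pow_le C A i j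
    _ = ‖C‖ ^ i / i.factorial * (‖A‖ * (‖C‖ ^ j / j.factorial)) := by
        field_simp

theorem mul_tsum_add_tsum_mul_add_one_eq_exp [NormedRing R]
    [NormedAlgebra ℝ R] [CompleteSpace R] {D : R} (hD : D * D = 0) (A : R) :
    D * (∑' p, expFormulaTerm D A p) + (∑' p, expFormulaTerm D A p) * D + 1 =
      exp (D * A + A * D) := by
  set B := D * A
  set C := A * D
  set E := ∑' p, expFormulaTerm D A p
  have hE : HasSum (expFormulaTerm D A) E := (summable_norm_expFormulaTerm D A).of_norm.hasSum
  have hDE : HasSum (fun n => ((n + 1).factorial : ℝ)⁻¹ •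
      ∑ p ∈ antidiagonal n, B ^ (p.1 + 1) * C ^ p.2) (D * E) := by
    refine (hE.mul_left D).sum_antidiagonal.congr_fun fun n => ?_
    rw [smul_sum]
    refine sum_congr rfl fun p hp => ?_
    rw [mul_expFormulaTerm, mem_antidiagonal.mp hp]
  have hED : HasSum (fun n => ((n + 1).factorial : ℝ)⁻¹ • C ^ (n + 1)) (E * D) := by
    refine ((Function.Injective.hasSum_iff (g := fun n => (n, 0)) (fun _ _ h => ?_) ?_).mpr
      (hE.mul_right D)).congr_fun fun n => ?_
    · exact (Prod.mk.inj h).1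
    · rintro ⟨i, j⟩ hp
      rw [expFormulaTerm_mul hD, if_neg fun hj => hp ⟨i, by rw [← hj]⟩]
    · simp [expFormulaTerm_mul hD, C]
  have hexp : HasSum (fun n => ((n + 1).factorial : ℝ)⁻¹ • (B + C) ^ (n + 1))
      (exp (B + C) - 1) := by
    simpa using (hasSum_nat_add_iff' 1).mpr (exp_series_hasSum_exp' (𝕂 := ℝ) (B + C))
  have hCB : C * B = 0 := by simp only [C, B, mul_assoc, ← mul_assoc D D, hD, zero_mul, mul_zero]
  have hsplit (n : ℕ) :
      (B + C) ^ (n + 1) = ∑ p ∈ antidiagonal n, B ^ (p.1 + 1) * C ^ p.2 + C ^ (n + 1) := by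
    rw [add_pow_eq_sum_antidiagonal_of_mul_eq_zero hCB, Nat.sum_antidiagonal_succ, pow_zero,
      one_mul, add_comm]
  have := (hDE.add hED).unique (hexp.congr_fun fun n => by rw [hsplit, smul_add])
  rw [this, sub_add_cancel]

end NormedRing

/-- exponential formula for GL⁻¹(V).  For a finite-dimensional real normed
vector space `V` and continuous linear endomorphisms `D = ∂`, `A` with `∂ ∘ ∂ = 0`, the
series `E(A) := Σ_{i,j ≥ 0} (1/(i+j+1)!) (A∘∂)^i ∘ A ∘ (A∘∂)^j` converges absolutely and
`δ(E(A)) = exp(∂∘A + A∘∂)` where `δ(s) := ∂∘s + s∘∂ + id`; in particular `δ(E(A))` is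
invertible, so `E(A)` lies in the group `{ s | δ(s) invertible }`. -/
theorem exp_formula {V : Type*} [NormedAddCommGroup V] [NormedSpace ℝ V]
    [FiniteDimensional ℝ V] (D A : V →L[ℝ] V) (hD : D * D = 0) :
    Summable (fun p : ℕ × ℕ =>
      ‖(((p.1 + p.2 + 1).factorial : ℝ))⁻¹ • ((A * D) ^ p.1 * A * (A * D) ^ p.2)‖) ∧
    D * (∑' p : ℕ × ℕ,
          (((p.1 + p.2 + 1).factorial : ℝ))⁻¹ • ((A * D) ^ p.1 * A * (A * D) ^ p.2))
      + (∑' p : ℕ × ℕ,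
          (((p.1 + p.2 + 1).factorial : ℝ))⁻¹ • ((A * D) ^ p.1 * A * (A * D) ^ p.2)) * D
      + 1
      = NormedSpace.exp (D * A + A * D) ∧
    IsUnit
      (D * (∑' p : ℕ × ℕ,
          (((p.1 + p.2 + 1).factorial : ℝ))⁻¹ • ((A * D) ^ p.1 * A * (A * D) ^ p.2))
      + (∑' p : ℕ × ℕ,
          (((p.1 + p.2 + 1).factorial : ℝ))⁻¹ • ((A * D) ^ p.1 * A * (A * D) ^ p.2)) * D
      + 1) := by
  have := FiniteDimensional.complete ℝ V
  have hexp := mul_tsum_add_tsum_mul_add_one_eq_exp hD A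
  refine ⟨summable_norm_expFormulaTerm D A, hexp, hexp ▸ ?_⟩
  exact isUnit_exp_of_mem_ball (𝕂 := ℝ)
    ((expSeries_radius_eq_top ℝ (V →L[ℝ] V)).symm ▸ edist_lt_top _ _)
end

section
/- Inverse Dyson series: let E be a finite-dimensional real normed vector space and a : ℝ → L(E,E) continuous. Define g(t) := id + Σ_{n ≥ 1} (−1)^n ∫_{t ≥ t₁ ≥ ⋯ ≥ t_n ≥ 0} a(t₁)∘⋯∘a(t_n) and h(t) := id + Σ_{n ≥ 1} ∫_{0 ≤ t₁ ≤ ⋯ ≤ t_n ≤ t} a(t₁)∘⋯∘a(t_n) (both series converge absolutely). Then h is differentiable with h'(t) = h(t) ∘ a(t), h(0) = id, and for all t ∈ [0,1] one has g(t) ∘ h(t) = id = h(t) ∘ g(t); i.e. h(t) = g(t)⁻¹. -/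
/-!
Both series are Dyson series `∑ₙ xₙ(t)` of a linear equation `x' = L(t) x` on `L(E,E)`, with
`x₀ = 1` and `xₙ₊₁(t) = ∫₀ᵗ L(u) xₙ(u) du`: for `g` take `L(u) = -(a(u) ∘ ·)`, for `h` take
`L(u) = (· ∘ a(u))`. The bound `‖xₙ(t)‖ ≤ (M|t|)ⁿ/n!` makes the differentiated series converge
locally uniformly, so `g' = -a g` and `h' = h a`. Then `(h g)' = h a g - h a g = 0`, so `h g = 1`,
and `g h = 1` since one-sided inverses are two-sided in finite dimension.
-/

open intervalIntegral MeasureTheory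

/-- The iterated integral `∫_{t ≥ t₁ ≥ ⋯ ≥ t_n ≥ 0} a(t₁)∘a(t₂)∘⋯∘a(t_n) dt₁⋯dt_n` over
the `n`-simplex, defined recursively via
`T a 0 t = id` and `T a (n+1) t = ∫_0^t a(u) ∘ (T a n u) du`. -/
noncomputable def simplexIntegral {E : Type*} [NormedAddCommGroup E] [NormedSpace ℝ E] :
    (ℝ → E →L[ℝ] E) → ℕ → ℝ → E →L[ℝ] E
  | _, 0, _ => 1
  | a, n + 1, t => ∫ u in (0:ℝ)..t, a u * simplexIntegral a n u

/-- The iterated integral `∫_{0 ≤ t₁ ≤ ⋯ ≤ t_n ≤ t} a(t₁)∘⋯∘a(t_n) dt₁⋯dt_n` over the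
opposite `n`-simplex, defined recursively via
`S a 0 t = id` and `S a (n+1) t = ∫_0^t (S a n u) ∘ a(u) du`. -/
noncomputable def simplexIntegral' {E : Type*} [NormedAddCommGroup E] [NormedSpace ℝ E] :
    (ℝ → E →L[ℝ] E) → ℕ → ℝ → E →L[ℝ] E
  | _, 0, _ => 1
  | a, n + 1, t => ∫ u in (0:ℝ)..t, simplexIntegral' a n u * a u

/-- The Dyson series `g(t) := id + Σ_{n ≥ 1} (−1)^n ∫_{t ≥ t₁ ≥ ⋯ ≥ t_n ≥ 0} a(t₁)∘⋯∘a(t_n)`. -/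
noncomputable def dysonSeries {E : Type*} [NormedAddCommGroup E] [NormedSpace ℝ E]
    (a : ℝ → E →L[ℝ] E) (t : ℝ) : E →L[ℝ] E :=
  1 + ∑' n : ℕ, ((-1 : ℝ)) ^ (n + 1) • simplexIntegral a (n + 1) t

/-- The series `h(t) := id + Σ_{n ≥ 1} ∫_{0 ≤ t₁ ≤ ⋯ ≤ t_n ≤ t} a(t₁)∘⋯∘a(t_n)`. -/
noncomputable def dysonSeriesInv {E : Type*} [NormedAddCommGroup E] [NormedSpace ℝ E]
    (a : ℝ → E →L[ℝ] E) (t : ℝ) : E →L[ℝ] E :=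
  1 + ∑' n : ℕ, simplexIntegral' a (n + 1) t

open Set
open scoped Nat Interval

lemma Continuous.exists_forall_abs_le_norm_le {F : Type*} [SeminormedAddCommGroup F]
    {f : ℝ → F} (hf : Continuous f) (R : ℝ) : ∃ M, ∀ u, |u| ≤ R → ‖f u‖ ≤ M :=
  let ⟨M, hM⟩ := isCompact_Icc.exists_bound_of_continuousOn (s := Icc (-R) R) hf.continuousOn
  ⟨M, fun u hu => hM u (abs_le.mp hu)⟩

section DysonTerm

variable {V : Type*} [NormedAddCommGroup V] [NormedSpace ℝ V]

noncomputable def dysonTerm (L : ℝ → V →L[ℝ] V) (x₀ : V) : ℕ → ℝ → V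
  | 0, _ => x₀
  | n + 1, t => ∫ u in (0 : ℝ)..t, L u (dysonTerm L x₀ n u)

variable {L : ℝ → V →L[ℝ] V} {x₀ : V}

@[simp]
lemma dysonTerm_zero (t : ℝ) : dysonTerm L x₀ 0 t = x₀ := rfl

lemma dysonTerm_succ (n : ℕ) (t : ℝ) :
    dysonTerm L x₀ (n + 1) t = ∫ u in (0 : ℝ)..t, L u (dysonTerm L x₀ n u) := rfl

@[simp]
lemma dysonTerm_succ_apply_zero (n : ℕ) : dysonTerm L x₀ (n + 1) 0 = 0 :=
  integral_same

lemma norm_dysonTerm_le {R M : ℝ} (hM : ∀ u, |u| ≤ R → ‖L u‖ ≤ M) (n : ℕ) {t : ℝ}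
    (ht : |t| ≤ R) : ‖dysonTerm L x₀ n t‖ ≤ ‖x₀‖ * (M * |t|) ^ n / n ! := by
  induction n generalizing t with
  | zero => simp
  | succ n ih =>
    have hle : ∀ u ∈ Ι 0 t,
        ‖L u (dysonTerm L x₀ n u)‖ ≤ M * (‖x₀‖ * (M * |u|) ^ n / n !) := by
      intro u hu
      have hut : |u| ≤ |t| := by simpa using abs_sub_left_of_mem_uIcc (uIoc_subset_uIcc hu)
      exact (L u).le_of_opNorm_le_of_le (hM u (hut.trans ht)) (ih (hut.trans ht))
    calc ‖dysonTerm L x₀ (n + 1) t‖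
        ≤ ∫ u in Ι 0 t, M ^ (n + 1) * ‖x₀‖ / n ! * |u - 0| ^ n := by
          rw [dysonTerm_succ, norm_intervalIntegral_eq]
          refine norm_integral_le_of_norm_le (Continuous.integrableOn_uIoc (by fun_prop)) ?_
          refine (ae_restrict_mem measurableSet_uIoc).mono fun u hu => (hle u hu).trans_eq ?_
          rw [sub_zero]
          ring
      _ = ‖x₀‖ * (M * |t|) ^ (n + 1) / (n + 1)! := by
          rw [MeasureTheory.integral_const_mul, integral_pow_abs_sub_uIoc, sub_zero,
            Nat.factorial_succ]
          push_cast
          field_simp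
          ring

lemma continuous_dysonTerm (hL : Continuous L) : ∀ n, Continuous (dysonTerm L x₀ n)
  | 0 => continuous_const
  | n + 1 => continuous_primitive
      (fun _ _ => (hL.clm_apply (continuous_dysonTerm hL n)).intervalIntegrable _ _) 0

lemma summable_norm_dysonTerm (hL : Continuous L) (t : ℝ) :
    Summable fun n => ‖dysonTerm L x₀ n t‖ := by
  obtain ⟨M, hM⟩ := hL.exists_forall_abs_le_norm_le |t|
  refine .of_nonneg_of_le (fun _ => norm_nonneg _) (fun n => norm_dysonTerm_le hM n le_rfl) ?_
  simpa only [mul_div_assoc] using (Real.summable_pow_div_factorial (M * |t|)).mul_left ‖x₀‖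

variable [CompleteSpace V]

lemma tsum_dysonTerm_eq_add (hL : Continuous L) (t : ℝ) :
    ∑' n, dysonTerm L x₀ n t = x₀ + ∑' n, dysonTerm L x₀ (n + 1) t := by
  rw [(summable_norm_dysonTerm hL t).of_norm.tsum_eq_zero_add, dysonTerm_zero]

lemma hasDerivAt_dysonTerm_succ (hL : Continuous L) (n : ℕ) (t : ℝ) :
    HasDerivAt (dysonTerm L x₀ (n + 1)) (L t (dysonTerm L x₀ n t)) t :=
  ((hL.clm_apply (continuous_dysonTerm hL n)).integral_hasStrictDerivAt 0 t).hasDerivAt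

lemma hasDerivAt_tsum_dysonTerm (hL : Continuous L) (t : ℝ) :
    HasDerivAt (fun s => ∑' n, dysonTerm L x₀ n s) (L t (∑' n, dysonTerm L x₀ n t)) t := by
  set R := |t| + 1
  have hR : 0 < R := by positivity
  obtain ⟨M, hM⟩ := hL.exists_forall_abs_le_norm_le R
  have hM0 : 0 ≤ M := (norm_nonneg _).trans (hM 0 (by simpa using hR.le))
  have hbound : ∀ n, ∀ s ∈ Ioo (-R) R,
      ‖L s (dysonTerm L x₀ n s)‖ ≤ M * (‖x₀‖ * (M * R) ^ n / n !) := by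
    intro n s hs
    have hsR : |s| ≤ R := abs_le.mpr ⟨hs.1.le, hs.2.le⟩
    refine (L s).le_of_opNorm_le_of_le (hM s hsR) ((norm_dysonTerm_le hM n hsR).trans ?_)
    gcongr
  have hsummable : Summable fun n => M * (‖x₀‖ * (M * R) ^ n / n !) := by
    simpa only [mul_div_assoc] using
      ((Real.summable_pow_div_factorial (M * R)).mul_left ‖x₀‖).mul_left M
  rw [(L t).map_tsum (summable_norm_dysonTerm hL t).of_norm]
  simp_rw [tsum_dysonTerm_eq_add hL]
  refine .const_add x₀ <| hasDerivAt_tsum_of_isPreconnected hsummable isOpen_Ioo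
    isPreconnected_Ioo (fun n s _ => hasDerivAt_dysonTerm_succ hL n s) hbound (y₀ := 0) ?_
    (by simp) ?_
  · exact ⟨neg_lt_zero.mpr hR, hR⟩
  · exact abs_lt.mp (lt_add_one |t|)

end DysonTerm

instance {𝕜 E : Type*} [NormedField 𝕜] [NormedAddCommGroup E] [NormedSpace 𝕜 E]
    [FiniteDimensional 𝕜 E] : IsDedekindFiniteMonoid (E →L[𝕜] E) :=
  .of_injective ContinuousLinearMap.toLinearMapRingHom ContinuousLinearMap.coe_injective

section DysonSeries

variable {E : Type*} [NormedAddCommGroup E] [NormedSpace ℝ E] (a : ℝ → E →L[ℝ] E)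

lemma neg_one_pow_smul_simplexIntegral (n : ℕ) (t : ℝ) :
    (-1 : ℝ) ^ n • simplexIntegral a n t =
      dysonTerm (fun u => -ContinuousLinearMap.mul ℝ (E →L[ℝ] E) (a u)) 1 n t := by
  induction n generalizing t with
  | zero => simp [simplexIntegral]
  | succ n ih =>
    simp only [simplexIntegral, dysonTerm_succ, ← ih, ← intervalIntegral.integral_smul]
    congr 1 with u
    simp [pow_succ]

lemma simplexIntegral'_eq_dysonTerm (n : ℕ) (t : ℝ) :
    simplexIntegral' a n t =
      dysonTerm (fun u => (ContinuousLinearMap.mul ℝ (E →L[ℝ] E)).flip (a u)) 1 n t := by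
  induction n generalizing t with
  | zero => rfl
  | succ n ih => simp [simplexIntegral', dysonTerm_succ, ih]

@[simp]
lemma dysonSeries_zero : dysonSeries a 0 = 1 := by
  simp [dysonSeries, simplexIntegral]

@[simp]
lemma dysonSeriesInv_zero : dysonSeriesInv a 0 = 1 := by
  simp [dysonSeriesInv, simplexIntegral']

variable {a} (ha : Continuous a)
include ha

lemma summable_norm_neg_one_pow_smul_simplexIntegral (t : ℝ) :
    Summable fun n => ‖(-1 : ℝ) ^ n • simplexIntegral a n t‖ := by
  simp_rw [neg_one_pow_smul_simplexIntegral]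
  exact summable_norm_dysonTerm (by fun_prop) t

lemma summable_norm_simplexIntegral' (t : ℝ) :
    Summable fun n => ‖simplexIntegral' a n t‖ := by
  simp_rw [simplexIntegral'_eq_dysonTerm]
  exact summable_norm_dysonTerm (by fun_prop) t

variable [CompleteSpace E]

lemma hasDerivAt_dysonSeries (t : ℝ) :
    HasDerivAt (dysonSeries a) (-(a t * dysonSeries a t)) t := by
  have h : dysonSeries a = fun s =>
      ∑' n, dysonTerm (fun u => -ContinuousLinearMap.mul ℝ (E →L[ℝ] E) (a u)) 1 n s := by
    funext s
    rw [tsum_dysonTerm_eq_add (by fun_prop)]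
    simp only [dysonSeries, neg_one_pow_smul_simplexIntegral]
  rw [h]
  exact hasDerivAt_tsum_dysonTerm (by fun_prop) t

lemma hasDerivAt_dysonSeriesInv (t : ℝ) :
    HasDerivAt (dysonSeriesInv a) (dysonSeriesInv a t * a t) t := by
  have h : dysonSeriesInv a = fun s => ∑' n,
      dysonTerm (fun u => (ContinuousLinearMap.mul ℝ (E →L[ℝ] E)).flip (a u)) 1 n s := by
    funext s
    rw [tsum_dysonTerm_eq_add (by fun_prop)]
    simp only [dysonSeriesInv, simplexIntegral'_eq_dysonTerm]
  rw [h]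
  exact hasDerivAt_tsum_dysonTerm (by fun_prop) t

lemma dysonSeriesInv_mul_dysonSeries (t : ℝ) : dysonSeriesInv a t * dysonSeries a t = 1 := by
  have hderiv : ∀ s, HasDerivAt (dysonSeriesInv a * dysonSeries a) 0 s := fun s => by
    simpa [mul_assoc] using (hasDerivAt_dysonSeriesInv ha s).mul (hasDerivAt_dysonSeries ha s)
  calc dysonSeriesInv a t * dysonSeries a t = (dysonSeriesInv a * dysonSeries a) 0 :=
        is_const_of_deriv_eq_zero (fun s => (hderiv s).differentiableAt)
          (fun s => (hderiv s).deriv) t 0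
    _ = 1 := by simp

end DysonSeries

/-- inverse Dyson series: both series converge absolutely, `h` is
differentiable with `h'(t) = h(t) ∘ a(t)`, `h(0) = id`, and `h(t)` is a two-sided
inverse of `g(t)` for all `t ∈ [0,1]`. -/
theorem dyson_inverse {E : Type*} [NormedAddCommGroup E] [NormedSpace ℝ E]
    [FiniteDimensional ℝ E] (a : ℝ → E →L[ℝ] E) (ha : Continuous a) :
    (∀ t ∈ Set.Icc (0:ℝ) 1,
      Summable fun n : ℕ => ‖((-1 : ℝ)) ^ (n + 1) • simplexIntegral a (n + 1) t‖) ∧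
    (∀ t ∈ Set.Icc (0:ℝ) 1,
      Summable fun n : ℕ => ‖simplexIntegral' a (n + 1) t‖) ∧
    dysonSeriesInv a 0 = 1 ∧
    (∀ t ∈ Set.Icc (0:ℝ) 1,
      HasDerivAt (dysonSeriesInv a) (dysonSeriesInv a t * a t) t) ∧
    (∀ t ∈ Set.Icc (0:ℝ) 1,
      dysonSeries a t * dysonSeriesInv a t = 1 ∧
      dysonSeriesInv a t * dysonSeries a t = 1) := by
  refine ⟨fun t _ => ?_, fun t _ => ?_, dysonSeriesInv_zero a,
    fun t _ => hasDerivAt_dysonSeriesInv ha t,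
    fun t _ => ⟨mul_eq_one_comm.mp (dysonSeriesInv_mul_dysonSeries ha t),
      dysonSeriesInv_mul_dysonSeries ha t⟩⟩
  · exact (summable_norm_neg_one_pow_smul_simplexIntegral ha t).comp_injective
      (add_left_injective 1)
  · exact (summable_norm_simplexIntegral' ha t).comp_injective (add_left_injective 1)
end
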